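/- arXiv:1506.06038 — 2 statements merged into one kernel-verified Lean document; each statement's English description precedes it below -/
import Mathlib

section
/- Let Σ be an alphabet, 𝕄 = (M,+,val,𝟘) a timed valuation monoid, 𝓛 ⊆ 𝕋Σ⁺ an unambiguously recognizable timed language and r : 𝕋Σ⁺ → M an unambiguously recognizable quantitative timed language over 𝕄. Then the quantitative timed language r ∩ 𝓛 is unambiguously recognizable over 𝕄. -/
open scoped NNReal Classical

/-! # Core definitions: timed automata and weighted timed automata -/

/-- Comparison operators ⋈ ∈ {<, ≤, =, ≥, >}. -/
inductive Cmp : Type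
  | lt | le | eq | ge | gt
  deriving DecidableEq

/-- Evaluation of a comparison `r ⋈ c` for `r ∈ ℝ≥0` and `c ∈ ℕ`. -/
def Cmp.eval : Cmp → ℝ≥0 → ℕ → Prop
  | .lt, r, c => r < (c : ℝ≥0)
  | .le, r, c => r ≤ (c : ℝ≥0)
  | .eq, r, c => r = (c : ℝ≥0)
  | .ge, r, c => (c : ℝ≥0) ≤ r
  | .gt, r, c => (c : ℝ≥0) < r

/-- Clock constraints over a set `C` of clocks: `True` or conjunctions of `x ⋈ c`. -/
inductive ClockConstraint (C : Type) : Type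
  | tt : ClockConstraint C
  | atom : C → Cmp → ℕ → ClockConstraint C
  | conj : ClockConstraint C → ClockConstraint C → ClockConstraint C

/-- A clock valuation assigns a non-negative real to each clock. -/
def ClockVal (C : Type) : Type := C → ℝ≥0

/-- Satisfaction of clock constraints. -/
def ClockConstraint.Sat {C : Type} (ν : ClockVal C) : ClockConstraint C → Prop
  | .tt => True
  | .atom x op c => op.eval (ν x) c
  | .conj φ ψ => φ.Sat ν ∧ ψ.Sat ν

/-- `ν + t`: add `t` to every clock. -/
def ClockVal.add {C : Type} (ν : ClockVal C) (t : ℝ≥0) : ClockVal C := fun x => ν x + t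

/-- `ν[Λ := 0]`: reset the clocks in `Λ` to `0`. -/
noncomputable def ClockVal.reset {C : Type} (ν : ClockVal C) (Λ : Set C) : ClockVal C :=
  fun x => if x ∈ Λ then 0 else ν x

/-- The clock valuation assigning `0` to every clock. -/
def ClockVal.zero {C : Type} : ClockVal C := fun _ => 0

/-- An edge of a timed automaton: an element of `L × Σ × Φ(C) × 2^C × L`. -/
structure Edge (L A C : Type) : Type where
  src : L
  label : A
  guard : ClockConstraint C
  reset : Set C
  dst : L

/-- A timed automaton over the alphabet `A`. -/
structure TimedAutomaton (A : Type) : Type 1 where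
  L : Type
  C : Type
  finL : Finite L
  finC : Finite C
  I : Set L
  F : Set L
  E : Set (Edge L A C)
  finE : E.Finite

/-- A (non-empty finite) timed word over `A`. -/
abbrev TimedWord (A : Type) : Type := { w : List (A × ℝ≥0) // w ≠ [] }

/-- `T.IsRunFrom ℓ ν w es` holds iff `es` is the sequence of edges of a run of `T`
reading the timed word `w`, starting in location `ℓ` with clock valuation `ν`,
and ending in a final location. -/
def TimedAutomaton.IsRunFrom {A : Type} (T : TimedAutomaton A) :
    T.L → ClockVal T.C → List (A × ℝ≥0) → List (Edge T.L A T.C) → Prop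
  | ℓ, _, [], [] => ℓ ∈ T.F
  | ℓ, ν, (a, t) :: w, e :: es =>
      e ∈ T.E ∧ e.src = ℓ ∧ e.label = a ∧ e.guard.Sat (ν.add t) ∧
      T.IsRunFrom e.dst ((ν.add t).reset e.reset) w es
  | _, _, [], _ :: _ => False
  | _, _, _ :: _, [] => False

/-- `Run_T(w)`: the set of runs (identified with their edge sequences) of `T` on `w`. -/
def TimedAutomaton.RunOn {A : Type} (T : TimedAutomaton A) (w : TimedWord A) :
    Set (List (Edge T.L A T.C)) :=
  { es | ∃ ℓ₀ ∈ T.I, T.IsRunFrom ℓ₀ ClockVal.zero w.1 es }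

/-- `L(T)`: the timed language accepted by `T`. -/
def TimedAutomaton.Lang {A : Type} (T : TimedAutomaton A) : Set (TimedWord A) :=
  { w | (T.RunOn w).Nonempty }

/-- A timed automaton is unambiguous if every timed word has at most one run. -/
def TimedAutomaton.Unambiguous {A : Type} (T : TimedAutomaton A) : Prop :=
  ∀ w : TimedWord A, (T.RunOn w).Subsingleton

/-- A timed automaton is deterministic if it has a single initial location and the guards of
any two distinct edges with the same source and label are jointly unsatisfiable. -/
def TimedAutomaton.Deterministic {A : Type} (T : TimedAutomaton A) : Prop :=
  (∃ ℓ, T.I = {ℓ}) ∧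
  ∀ e₁ ∈ T.E, ∀ e₂ ∈ T.E, e₁.src = e₂.src → e₁.label = e₂.label → e₁ ≠ e₂ →
    ∀ ν : ClockVal T.C, ¬ (e₁.guard.Sat ν ∧ e₂.guard.Sat ν)

/-- A timed automaton is sequential if it has a single initial location and any two edges
with the same source and label are equal. -/
def TimedAutomaton.Sequential {A : Type} (T : TimedAutomaton A) : Prop :=
  (∃ ℓ, T.I = {ℓ}) ∧
  ∀ e₁ ∈ T.E, ∀ e₂ ∈ T.E, e₁.src = e₂.src → e₁.label = e₂.label → e₁ = e₂

/-- A timed language is recognizable by a timed automaton satisfying `P`. -/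
def TLRecognizableBy {A : Type} (P : TimedAutomaton A → Prop) (𝓛 : Set (TimedWord A)) : Prop :=
  ∃ T : TimedAutomaton A, P T ∧ T.Lang = 𝓛

/-- A weighted timed automaton over the alphabet `A` and (the domain `M` of) a timed
valuation monoid: a timed automaton together with weights on locations and edges.
The timed valuation monoid itself is given by an `AddCommMonoid M` instance together with a
timed valuation function `val : List ((M × M) × ℝ≥0) → M` (only its values on non-empty
lists, i.e. on `𝕋(M×M)⁺`, ever matter). -/
structure WTA (A M : Type) extends TimedAutomaton A where
  wtL : L → M
  wtE : Edge L A C → M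

/-- The timed word `wt♯(ρ) ∈ 𝕋(M×M)⁺` associated with a run: the `i`-th letter is
`((wt(ℓ_{i-1}), wt(e_i)), t_i)`, where `ℓ_{i-1}` is the source location of edge `e_i`. -/
def WTA.runWord {A M : Type} (W : WTA A M) (w : List (A × ℝ≥0))
    (es : List (Edge W.L A W.C)) : List ((M × M) × ℝ≥0) :=
  List.zipWith (fun (p : A × ℝ≥0) e => ((W.wtL e.src, W.wtE e), p.2)) w es

/-- The behavior `‖W‖ : 𝕋A⁺ → M` of a WTA: `‖W‖(w) = Σ (val(wt♯(ρ)) : ρ ∈ Run_W(w))`,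
the empty sum being `0` (the monoid unit `𝟘`). -/
noncomputable def WTA.behavior {A M : Type} [AddCommMonoid M]
    (val : List ((M × M) × ℝ≥0) → M) (W : WTA A M) (w : TimedWord A) : M :=
  ∑ᶠ es ∈ W.toTimedAutomaton.RunOn w, val (W.runWord w.1 es)

/-- A quantitative timed language `r : 𝕋A⁺ → M` is recognizable over the timed valuation
monoid `(M, +, val, 𝟘)` by a WTA whose underlying timed automaton satisfies `P`. -/
def QTLRecognizableBy {A M : Type} [AddCommMonoid M] (val : List ((M × M) × ℝ≥0) → M)
    (P : TimedAutomaton A → Prop) (r : TimedWord A → M) : Prop :=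
  ∃ W : WTA A M, P W.toTimedAutomaton ∧ ∀ w, W.behavior val w = r w

/-- Recognizability (no restriction on the underlying timed automaton). -/
def QTLRecognizable {A M : Type} [AddCommMonoid M] (val : List ((M × M) × ℝ≥0) → M)
    (r : TimedWord A → M) : Prop :=
  ∃ W : WTA A M, ∀ w, W.behavior val w = r w

/-- Renaming of timed words along `h : Γ → A`. -/
def mapTimedWord {Γ A : Type} (h : Γ → A) (v : TimedWord Γ) : TimedWord A :=
  ⟨v.1.map (fun p => (h p.1, p.2)), by
    cases v with
    | mk l hl => cases l with
      | nil => exact absurd rfl hl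
      | cons p l => simp⟩

/-- `h(r)(w) = Σ (r(v) : v ∈ 𝕋Γ⁺, h(v) = w)` (a finite sum when `Γ` is finite). -/
noncomputable def pushQTL {Γ A M : Type} [AddCommMonoid M] (h : Γ → A)
    (r : TimedWord Γ → M) (w : TimedWord A) : M :=
  ∑ᶠ v ∈ { v : TimedWord Γ | mapTimedWord h v = w }, r v

/-- `(val ∘ g)(w) = val((g(a₁),t₁)…(g(aₙ),tₙ))`. -/
def valComp {A M : Type} (val : List ((M × M) × ℝ≥0) → M) (g : A → M × M)
    (w : TimedWord A) : M :=
  val (w.1.map (fun p => (g p.1, p.2)))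

/-- The intersection `r ∩ 𝓛` of a quantitative timed language with a timed language. -/
noncomputable def interQTL {A M : Type} [Zero M] (r : TimedWord A → M)
    (𝓛 : Set (TimedWord A)) (w : TimedWord A) : M :=
  if w ∈ 𝓛 then r w else 0

/-- Membership in the Nivat class `N^P(A, 𝕄)`: `𝕃 = h((val ∘ g) ∩ 𝓛)` for some alphabet `Γ`,
maps `h : Γ → A`, `g : Γ → M × M` and a timed language `𝓛` recognizable by a timed
automaton satisfying `P`. -/
def NivatMem {A M : Type} [AddCommMonoid M] (val : List ((M × M) × ℝ≥0) → M)
    (P : ∀ {Γ : Type}, TimedAutomaton Γ → Prop) (𝕃 : TimedWord A → M) : Prop :=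
  ∃ (Γ : Type) (_ : Finite Γ) (_ : Nonempty Γ) (h : Γ → A) (g : Γ → M × M)
    (𝓛 : Set (TimedWord Γ)),
      TLRecognizableBy P 𝓛 ∧ ∀ w, 𝕃 w = pushQTL h (interQTL (valComp val g) 𝓛) w

/-- Membership in the class `H^P(A, 𝕄)`: `𝕃 = h(r)` for some alphabet `Γ`, `h : Γ → A`
and a quantitative timed language `r` recognizable by a WTA whose underlying timed
automaton satisfies `P`. -/
def HMem {A M : Type} [AddCommMonoid M] (val : List ((M × M) × ℝ≥0) → M)
    (P : ∀ {Γ : Type}, TimedAutomaton Γ → Prop) (𝕃 : TimedWord A → M) : Prop :=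
  ∃ (Γ : Type) (_ : Finite Γ) (_ : Nonempty Γ) (h : Γ → A) (r : TimedWord Γ → M),
      QTLRecognizableBy val (fun T => P T) r ∧ ∀ w, 𝕃 w = pushQTL h r w

/-- Idempotency of a timed valuation monoid. -/
def IsIdempotent (M : Type) [Add M] : Prop := ∀ m : M, m + m = m

/-- Location-independence of a timed valuation function: the value of `val` on a non-empty
timed word over `M × M` depends only on the second components and the time stamps. -/
def LocIndep {M : Type} (val : List ((M × M) × ℝ≥0) → M) : Prop :=
  ∀ l l' : List ((M × M) × ℝ≥0), l ≠ [] →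
    l.map (fun p => (p.1.2, p.2)) = l'.map (fun p => (p.1.2, p.2)) → val l = val l'

/-!
The intersection is recognized by the product of a WTA `W` for `r` with an unambiguous timed
automaton `T` for `𝓛`, carrying the weights of `W`. Runs of the product on `w` are exactly the
pairs of runs of `W` and `T` on `w`. Since `T` has at most one run on `w`, the runs of the
product are in bijection with those of `W` when `w ∈ 𝓛`, with the same weights, and there are
none otherwise. The product of two unambiguous automata is again unambiguous.
-/

namespace ClockConstraint

variable {C D C₁ C₂ : Type}

def rename (f : C → D) : ClockConstraint C → ClockConstraint D
  | .tt => .tt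
  | .atom x op c => .atom (f x) op c
  | .conj φ ψ => .conj (φ.rename f) (ψ.rename f)

theorem sat_rename (f : C → D) (ν : ClockVal D) (φ : ClockConstraint C) :
    (φ.rename f).Sat ν ↔ φ.Sat fun x => ν (f x) := by
  induction φ <;> simp_all [rename, Sat]

def restrictInl : ClockConstraint (C₁ ⊕ C₂) → ClockConstraint C₁
  | .tt => .tt
  | .atom (.inl x) op c => .atom x op c
  | .atom (.inr _) _ _ => .tt
  | .conj φ ψ => .conj φ.restrictInl ψ.restrictInl

@[simp]
theorem restrictInl_rename_inl (φ : ClockConstraint C₁) :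
    (φ.rename (Sum.inl : C₁ → C₁ ⊕ C₂)).restrictInl = φ := by
  induction φ <;> simp_all [rename, restrictInl]

end ClockConstraint

namespace ClockVal

variable {C₁ C₂ : Type}

def sum (ν₁ : ClockVal C₁) (ν₂ : ClockVal C₂) : ClockVal (C₁ ⊕ C₂) := Sum.elim ν₁ ν₂

theorem sum_add (ν₁ : ClockVal C₁) (ν₂ : ClockVal C₂) (t : ℝ≥0) :
    (ν₁.sum ν₂).add t = (ν₁.add t).sum (ν₂.add t) := by
  funext x
  cases x <;> rfl

theorem sum_reset (ν₁ : ClockVal C₁) (ν₂ : ClockVal C₂) (Λ₁ : Set C₁) (Λ₂ : Set C₂) :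
    (ν₁.sum ν₂).reset (Sum.inl '' Λ₁ ∪ Sum.inr '' Λ₂) = (ν₁.reset Λ₁).sum (ν₂.reset Λ₂) := by
  funext x
  cases x <;> simp [reset, sum, Sum.elim]

theorem zero_sum_zero : (zero.sum zero : ClockVal (C₁ ⊕ C₂)) = zero :=
  Sum.elim_lam_const_lam_const 0

end ClockVal

namespace Edge

variable {L₁ L₂ A C₁ C₂ : Type}

def prod (e₁ : Edge L₁ A C₁) (e₂ : Edge L₂ A C₂) : Edge (L₁ × L₂) A (C₁ ⊕ C₂) where
  src := (e₁.src, e₂.src)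
  label := e₁.label
  guard := .conj (e₁.guard.rename Sum.inl) (e₂.guard.rename Sum.inr)
  reset := Sum.inl '' e₁.reset ∪ Sum.inr '' e₂.reset
  dst := (e₁.dst, e₂.dst)

theorem prod_reset (e₁ : Edge L₁ A C₁) (e₂ : Edge L₂ A C₂) :
    (e₁.prod e₂).reset = Sum.inl '' e₁.reset ∪ Sum.inr '' e₂.reset :=
  rfl

theorem sat_prod_guard (e₁ : Edge L₁ A C₁) (e₂ : Edge L₂ A C₂) (ν₁ : ClockVal C₁)
    (ν₂ : ClockVal C₂) :
    (e₁.prod e₂).guard.Sat (ν₁.sum ν₂) ↔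
      e₁.guard.Sat ν₁ ∧ e₂.guard.Sat ν₂ :=
  and_congr (ClockConstraint.sat_rename _ _ _) (ClockConstraint.sat_rename _ _ _)

/-- A left inverse of `(·.prod e₂)`, through which a product edge carries the weight of its
first component. -/
def fst (e : Edge (L₁ × L₂) A (C₁ ⊕ C₂)) : Edge L₁ A C₁ where
  src := e.src.1
  label := e.label
  guard := match e.guard with
    | .conj φ _ => φ.restrictInl
    | _ => .tt
  reset := Sum.inl ⁻¹' e.reset
  dst := e.dst.1

@[simp]
theorem fst_prod (e₁ : Edge L₁ A C₁) (e₂ : Edge L₂ A C₂) : (e₁.prod e₂).fst = e₁ := by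
  simp [fst, prod, Set.preimage_image_eq _ Sum.inl_injective]

theorem map_fst_zipWith_prod {es₁ : List (Edge L₁ A C₁)} {es₂ : List (Edge L₂ A C₂)}
    (h : es₁.length ≤ es₂.length) : (List.zipWith prod es₁ es₂).map fst = es₁ := by
  rw [← List.map_uncurry_zip_eq_zipWith, List.map_map]
  exact (List.map_congr_left fun _ _ => fst_prod _ _).trans (List.map_fst_zip h)

end Edge

namespace TimedAutomaton

variable {A : Type}

@[reducible]
def prod (T₁ T₂ : TimedAutomaton A) : TimedAutomaton A where
  L := T₁.L × T₂.L
  C := T₁.C ⊕ T₂.C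
  finL := have := T₁.finL; have := T₂.finL; inferInstance
  finC := have := T₁.finC; have := T₂.finC; inferInstance
  I := T₁.I ×ˢ T₂.I
  F := T₁.F ×ˢ T₂.F
  E := (fun p => p.1.prod p.2) '' {p ∈ T₁.E ×ˢ T₂.E | p.1.label = p.2.label}
  finE := ((T₁.finE.prod T₂.finE).subset (Set.sep_subset _ _)).image _

theorem IsRunFrom.length_eq {T : TimedAutomaton A} :
    ∀ {ℓ ν w es}, T.IsRunFrom ℓ ν w es → es.length = w.length
  | _, _, [], [], _ => rfl
  | _, _, (_, _) :: _, _ :: _, h => congrArg (· + 1) (IsRunFrom.length_eq h.2.2.2.2)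

variable {T₁ T₂ : TimedAutomaton A}

theorem IsRunFrom.prod :
    ∀ {ℓ₁ ℓ₂ ν₁ ν₂ w es₁ es₂}, T₁.IsRunFrom ℓ₁ ν₁ w es₁ → T₂.IsRunFrom ℓ₂ ν₂ w es₂ →
      (T₁.prod T₂).IsRunFrom (ℓ₁, ℓ₂) (ν₁.sum ν₂) w (List.zipWith Edge.prod es₁ es₂)
  | _, _, _, _, [], [], [], h₁, h₂ => ⟨h₁, h₂⟩
  | _, _, ν₁, ν₂, (_, t) :: _, e₁ :: _, e₂ :: _,
      ⟨he₁, rfl, hl₁, hg₁, hr₁⟩, ⟨he₂, rfl, hl₂, hg₂, hr₂⟩ => by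
    refine ⟨⟨(e₁, e₂), ⟨⟨he₁, he₂⟩, hl₁.trans hl₂.symm⟩, rfl⟩, rfl, hl₁, ?_, ?_⟩
    · rw [ClockVal.sum_add]
      exact (Edge.sat_prod_guard e₁ e₂ _ _).2 ⟨hg₁, hg₂⟩
    · rw [ClockVal.sum_add, Edge.prod_reset, ClockVal.sum_reset]
      exact IsRunFrom.prod hr₁ hr₂

theorem IsRunFrom.of_prod :
    ∀ {ℓ₁ ℓ₂ ν₁ ν₂ w es}, (T₁.prod T₂).IsRunFrom (ℓ₁, ℓ₂) (ν₁.sum ν₂) w es →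
      ∃ es₁ es₂, T₁.IsRunFrom ℓ₁ ν₁ w es₁ ∧ T₂.IsRunFrom ℓ₂ ν₂ w es₂ ∧
        es = List.zipWith Edge.prod es₁ es₂
  | _, _, _, _, [], [], h => ⟨[], [], h.1, h.2, rfl⟩
  | _, _, ν₁, ν₂, (_, t) :: _, _ :: _,
      ⟨⟨(e₁, e₂), ⟨⟨he₁, he₂⟩, hl⟩, rfl⟩, hsrc, hl₁, hg, hr⟩ => by
    obtain ⟨rfl, rfl⟩ := Prod.mk.inj hsrc
    beta_reduce at hr
    rw [ClockVal.sum_add] at hg hr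
    obtain ⟨hg₁, hg₂⟩ := (Edge.sat_prod_guard e₁ e₂ _ _).1 hg
    rw [Edge.prod_reset, ClockVal.sum_reset] at hr
    obtain ⟨es₁, es₂, hr₁, hr₂, rfl⟩ := IsRunFrom.of_prod hr
    exact ⟨e₁ :: es₁, e₂ :: es₂, ⟨he₁, rfl, hl₁, hg₁, hr₁⟩,
      ⟨he₂, rfl, hl.symm.trans hl₁, hg₂, hr₂⟩, rfl⟩

theorem runOn_prod (w : TimedWord A) :
    (T₁.prod T₂).RunOn w = Set.image2 (List.zipWith Edge.prod) (T₁.RunOn w) (T₂.RunOn w) := by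
  ext es
  constructor
  · rintro ⟨⟨ℓ₁, ℓ₂⟩, ⟨hI₁, hI₂⟩, h⟩
    rw [← ClockVal.zero_sum_zero] at h
    obtain ⟨es₁, es₂, h₁, h₂, rfl⟩ := h.of_prod
    exact ⟨es₁, ⟨ℓ₁, hI₁, h₁⟩, es₂, ⟨ℓ₂, hI₂, h₂⟩, rfl⟩
  · rintro ⟨es₁, ⟨ℓ₁, hI₁, h₁⟩, es₂, ⟨ℓ₂, hI₂, h₂⟩, rfl⟩
    refine ⟨(ℓ₁, ℓ₂), ⟨hI₁, hI₂⟩, ?_⟩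
    rw [← ClockVal.zero_sum_zero]
    exact h₁.prod h₂

theorem Unambiguous.prod (h₁ : T₁.Unambiguous) (h₂ : T₂.Unambiguous) :
    (T₁.prod T₂).Unambiguous := fun w => by
  rw [runOn_prod]
  exact (h₁ w).image2 (h₂ w) _

end TimedAutomaton

namespace WTA

variable {A M : Type}

@[reducible]
def prod (W : WTA A M) (T : TimedAutomaton A) : WTA A M where
  toTimedAutomaton := W.toTimedAutomaton.prod T
  wtL p := W.wtL p.1
  wtE e := W.wtE e.fst

theorem runWord_prod (W : WTA A M) (T : TimedAutomaton A) (w : List (A × ℝ≥0))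
    (es : List (Edge (W.L × T.L) A (W.C ⊕ T.C))) :
    (W.prod T).runWord w es = W.runWord w (es.map Edge.fst) := by
  rw [runWord, runWord, List.zipWith_map_right]
  rfl

theorem behavior_prod [AddCommMonoid M] (val : List ((M × M) × ℝ≥0) → M) (W : WTA A M)
    {T : TimedAutomaton A} (hT : T.Unambiguous) (w : TimedWord A) :
    (W.prod T).behavior val w = interQTL (W.behavior val) T.Lang w := by
  rw [behavior, TimedAutomaton.runOn_prod, interQTL, TimedAutomaton.Lang, Set.mem_ofPred_eq]
  obtain hempty | ⟨es₂, hsingle⟩ := (hT w).eq_empty_or_singleton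
  · simp [hempty]
  · obtain ⟨_, _, h₂⟩ : es₂ ∈ T.RunOn w := hsingle ▸ Set.mem_singleton es₂
    have hfst : ∀ es₁ ∈ W.RunOn w, (List.zipWith Edge.prod es₁ es₂).map Edge.fst = es₁ :=
      fun es₁ ⟨_, _, h₁⟩ ↦ Edge.map_fst_zipWith_prod (h₁.length_eq.trans h₂.length_eq.symm).le
    rw [hsingle, if_pos (Set.singleton_nonempty _), Set.image2_singleton_right,
      finsum_mem_image (Set.LeftInvOn.injOn (f₁' := List.map Edge.fst) hfst)]
    exact finsum_mem_congr rfl fun es₁ h => by rw [runWord_prod, hfst es₁ h]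

end WTA

theorem interQTL_unambiguously_recognizable_general {S M : Type}
    [AddCommMonoid M] (val : List ((M × M) × ℝ≥0) → M)
    (𝓛 : Set (TimedWord S)) (h𝓛 : TLRecognizableBy TimedAutomaton.Unambiguous 𝓛)
    (r : TimedWord S → M)
    (hr : QTLRecognizableBy val TimedAutomaton.Unambiguous r) :
    QTLRecognizableBy val TimedAutomaton.Unambiguous (interQTL r 𝓛) := by
  obtain ⟨T, hT, rfl⟩ := h𝓛
  obtain ⟨W, hW, hWr⟩ := hr
  refine ⟨W.prod T, hW.prod hT, fun w => ?_⟩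
  rw [W.behavior_prod val hT, interQTL, interQTL, hWr]

/-- If `𝓛 ⊆ 𝕋Σ⁺` is an unambiguously recognizable timed language and
`r : 𝕋Σ⁺ → M` is an unambiguously recognizable quantitative timed language over a timed
valuation monoid `𝕄`, then `r ∩ 𝓛` is unambiguously recognizable over `𝕄`. -/
theorem interQTL_unambiguously_recognizable {S M : Type} [Finite S] [Nonempty S]
    [AddCommMonoid M] (val : List ((M × M) × ℝ≥0) → M)
    (𝓛 : Set (TimedWord S)) (h𝓛 : TLRecognizableBy TimedAutomaton.Unambiguous 𝓛)
    (r : TimedWord S → M)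
    (hr : QTLRecognizableBy val TimedAutomaton.Unambiguous r) :
    QTLRecognizableBy val TimedAutomaton.Unambiguous (interQTL r 𝓛) :=
  interQTL_unambiguously_recognizable_general val 𝓛 h𝓛 r hr
end

section
/- Let Σ be a singleton alphabet and 𝕄 = (ℕ,+,val,0) the timed valuation monoid with the usual addition of natural numbers and val(((m₁,m₁'),t₁)…((mₙ,mₙ'),tₙ)) = m₁'·…·mₙ'. Let r : 𝕋Σ⁺ → ℕ be the constant quantitative timed language with r(w) = 1 for all w. Then r is recognizable over 𝕄, and for every timed language 𝓛 ⊆ 𝕋Σ⁺ that is recognizable but not unambiguously recognizable, the quantitative timed language r ∩ 𝓛 belongs to N(Σ,𝕄) but is not recognizable over 𝕄 (so r ∩ 𝓛 ∈ N(Σ,𝕄) \ Rec(Σ,𝕄)). -/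
open scoped NNReal Classical

/-- The timed valuation function `val(((m₁,m₁'),t₁)…((mₙ,mₙ'),tₙ)) = m₁'·…·mₙ'` over the
timed valuation monoid `(ℕ, +, val, 0)` of Example `Ex:Bad`. -/
def valProd : List ((ℕ × ℕ) × ℝ≥0) → ℕ := fun l => (l.map (fun p => p.1.2)).prod

/-! Over `valProd` the weight of a run is the product of its edge weights, so it is either `0` or
at least `1`. Given a WTA `W` whose behavior is `r ∩ 𝓛`, delete its edges of weight `0`: the runs
left are exactly the runs of nonzero weight, so on every word their number is at most
`‖W‖(w) ≤ 1`, and it is nonzero exactly on `𝓛`. This is an unambiguous timed automaton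
recognizing `𝓛`. Membership in `N(Σ, 𝕄)` is witnessed by `Γ = Σ`, `h = id` and `g ≡ (1, 1)`. -/

namespace TimedAutomaton

variable {A : Type} {T : TimedAutomaton A}

theorem IsRunFrom.length_eq_s9 :
    ∀ {ℓ ν l es}, T.IsRunFrom ℓ ν l es → es.length = l.length
  | _, _, [], [], _ => rfl
  | _, _, (_, _) :: _, _ :: _, h => congrArg Nat.succ h.2.2.2.2.length_eq_s9
  | _, _, [], _ :: _, h => h.elim
  | _, _, _ :: _, [], h => h.elim

theorem IsRunFrom.forall_mem_E :
    ∀ {ℓ ν l es}, T.IsRunFrom ℓ ν l es → ∀ e ∈ es, e ∈ T.E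
  | _, _, [], [], _ => by simp
  | _, _, (_, _) :: _, _ :: _, h => List.forall_mem_cons.2 ⟨h.1, h.2.2.2.2.forall_mem_E⟩
  | _, _, [], _ :: _, h => h.elim
  | _, _, _ :: _, [], h => h.elim

variable (T)

theorem finite_runOn (w : TimedWord A) : (T.RunOn w).Finite := by
  have := T.finE.to_subtype
  refine ((List.finite_length_eq T.E w.1.length).image (List.map Subtype.val)).subset ?_
  rintro es ⟨ℓ₀, -, hrun⟩
  lift es to List T.E using hrun.forall_mem_E
  exact ⟨es, by simpa using hrun.length_eq_s9, rfl⟩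

def restrict (E' : Set (Edge T.L A T.C)) : TimedAutomaton A :=
  { T with E := T.E ∩ E', finE := T.finE.inter_of_left E' }

variable {T}

theorem isRunFrom_restrict_iff {E' : Set (Edge T.L A T.C)} :
    ∀ {ℓ ν l es}, (T.restrict E').IsRunFrom ℓ ν l es ↔ T.IsRunFrom ℓ ν l es ∧ ∀ e ∈ es, e ∈ E'
  | _, _, [], [] => ⟨fun h => ⟨h, by simp⟩, And.left⟩
  | _, _, (_, _) :: l, e :: es => by
    change (e ∈ T.E ∧ e ∈ E') ∧ _ ∧ _ ∧ _ ∧ (T.restrict E').IsRunFrom _ _ l es ↔ _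
    rw [isRunFrom_restrict_iff]
    simp only [IsRunFrom, List.forall_mem_cons]
    tauto
  | _, _, [], _ :: _ => by simp [IsRunFrom]
  | _, _, _ :: _, [] => by simp [IsRunFrom]

theorem runOn_restrict (E' : Set (Edge T.L A T.C)) (w : TimedWord A) :
    (T.restrict E').RunOn w = {es ∈ T.RunOn w | ∀ e ∈ es, e ∈ E'} := by
  ext es
  simp only [RunOn, Set.mem_ofPred_eq, isRunFrom_restrict_iff]
  exact ⟨fun ⟨ℓ₀, hℓ₀, hrun, hE'⟩ => ⟨⟨ℓ₀, hℓ₀, hrun⟩, hE'⟩,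
    fun ⟨⟨ℓ₀, hℓ₀, hrun⟩, hE'⟩ => ⟨ℓ₀, hℓ₀, hrun, hE'⟩⟩

end TimedAutomaton

namespace WTA

variable {A : Type}

def support {M : Type} [Zero M] (W : WTA A M) : TimedAutomaton A :=
  W.toTimedAutomaton.restrict {e | W.wtE e ≠ 0}

variable (W : WTA A ℕ)

theorem map_runWord :
    ∀ {l : List (A × ℝ≥0)} {es : List (Edge W.L A W.C)}, es.length = l.length →
      (W.runWord l es).map (fun p => p.1.2) = es.map W.wtE
  | [], [], _ => rfl
  | _ :: _, _ :: _, h => congrArg (_ :: ·) (map_runWord (Nat.succ.inj h))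

theorem runOn_support (w : TimedWord A) :
    W.support.RunOn w = {es ∈ W.RunOn w | valProd (W.runWord w.1 es) ≠ 0} := by
  unfold support
  rw [TimedAutomaton.runOn_restrict]
  ext es
  refine and_congr_right fun ⟨_, _, hrun⟩ => ?_
  rw [valProd, W.map_runWord hrun.length_eq_s9, Ne, List.prod_eq_zero_iff]
  simp

theorem behavior_valProd_eq_finsum_support (w : TimedWord A) :
    W.behavior valProd w = ∑ᶠ es ∈ W.support.RunOn w, valProd (W.runWord w.1 es) := by
  rw [runOn_support, behavior]
  exact (finsum_mem_inter_support _ _).symm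

theorem ncard_runOn_support_le_behavior (w : TimedWord A) :
    (W.support.RunOn w).ncard ≤ W.behavior valProd w := by
  have hfin := W.support.finite_runOn w
  rw [behavior_valProd_eq_finsum_support, ← finsum_one, finsum_mem_eq_finite_toFinset_sum _ hfin,
    finsum_mem_eq_finite_toFinset_sum _ hfin]
  refine Finset.sum_le_sum fun es hes => Nat.one_le_iff_ne_zero.2 ?_
  rw [hfin.mem_toFinset, runOn_support] at hes
  exact hes.2

theorem mem_lang_support_iff (w : TimedWord A) :
    w ∈ W.support.Lang ↔ W.behavior valProd w ≠ 0 := by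
  refine ⟨fun hw => ?_, fun hw => ?_⟩
  · have := (Set.ncard_pos (W.support.finite_runOn w)).2 hw
    exact (this.trans_le (W.ncard_runOn_support_le_behavior w)).ne'
  · by_contra hempty
    rw [behavior_valProd_eq_finsum_support, Set.not_nonempty_iff_eq_empty.1 hempty,
      finsum_mem_empty] at hw
    exact hw rfl

theorem unambiguous_support_of_behavior_le_one (h : ∀ w, W.behavior valProd w ≤ 1) :
    W.support.Unambiguous := fun w =>
  have := (W.support.finite_runOn w).to_subtype
  Set.ncard_le_one_iff_subsingleton.1 ((W.ncard_runOn_support_le_behavior w).trans (h w))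

end WTA

theorem tlRecognizableBy_unambiguous_of_qtlRecognizable_interQTL {A : Type}
    {𝓛 : Set (TimedWord A)} (h : QTLRecognizable valProd (interQTL (fun _ => (1 : ℕ)) 𝓛)) :
    TLRecognizableBy TimedAutomaton.Unambiguous 𝓛 := by
  obtain ⟨W, hW⟩ := h
  refine ⟨W.support, W.unambiguous_support_of_behavior_le_one fun w => ?_, Set.ext fun w => ?_⟩
  · rw [hW, interQTL]
    split_ifs <;> simp
  · rw [WTA.mem_lang_support_iff, hW, interQTL]
    split_ifs <;> simp [*]

section ConstOne

variable (S : Type) [Finite S]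

def constOneWTA : WTA S ℕ where
  L := Unit
  C := Unit
  finL := inferInstance
  finC := inferInstance
  I := Set.univ
  F := Set.univ
  E := Set.range fun a => ⟨(), a, .tt, ∅, ()⟩
  finE := Set.finite_range _
  wtL := fun _ => 1
  wtE := fun _ => 1

variable {S}

-- Typed over `(constOneWTA S).L` rather than `Unit`, so that rewriting `RunOn` stays type-correct.
def constOneWTA.loop (a : S) : Edge (constOneWTA S).L S (constOneWTA S).C := ⟨(), a, .tt, ∅, ()⟩

theorem isRunFrom_constOneWTA_iff :
    ∀ {ν l es}, (constOneWTA S).IsRunFrom () ν l es ↔ es = l.map fun p => constOneWTA.loop p.1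
  | _, [], [] => iff_of_true trivial rfl
  | _, [], _ :: _ => iff_of_false id (by simp)
  | _, _ :: _, [] => iff_of_false id (by simp)
  | _, (a, _) :: l, e :: es => by
    change _ ∧ _ ∧ _ ∧ _ ∧ (constOneWTA S).IsRunFrom () _ l es ↔ _
    rw [isRunFrom_constOneWTA_iff, List.map_cons, List.cons_eq_cons]
    constructor
    · rintro ⟨⟨b, rfl⟩, -, rfl, -, h⟩
      exact ⟨rfl, h⟩
    · rintro ⟨rfl, h⟩
      exact ⟨⟨a, rfl⟩, rfl, rfl, trivial, h⟩

theorem runOn_constOneWTA (w : TimedWord S) :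
    (constOneWTA S).RunOn w = {w.1.map fun p => constOneWTA.loop p.1} := by
  ext es
  exact ⟨fun ⟨_, _, hrun⟩ => isRunFrom_constOneWTA_iff.1 hrun,
    fun hes => ⟨(), trivial, isRunFrom_constOneWTA_iff.2 hes⟩⟩

theorem qtlRecognizable_const_one : QTLRecognizable valProd (fun _ : TimedWord S => (1 : ℕ)) := by
  refine ⟨constOneWTA S, fun w => ?_⟩
  rw [WTA.behavior, runOn_constOneWTA, finsum_mem_singleton, valProd,
    WTA.map_runWord _ (List.length_map _)]
  simp [constOneWTA]

end ConstOne

theorem pushQTL_id {A M : Type} [AddCommMonoid M] (r : TimedWord A → M) (w : TimedWord A) :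
    pushQTL id r w = r w := by
  have hfiber : {v : TimedWord A | mapTimedWord id v = w} = {w} := by
    ext v
    simp [mapTimedWord, Subtype.ext_iff]
  rw [pushQTL, hfiber, finsum_mem_singleton]

theorem valComp_valProd_const_one {A : Type} (w : TimedWord A) :
    valComp valProd (fun _ => (1, 1)) w = 1 := by
  simp only [valComp, valProd, List.map_map]
  exact List.prod_eq_one fun _ hx => by
    obtain ⟨_, -, rfl⟩ := List.mem_map.1 hx
    rfl

theorem nivatMem_interQTL_const_one {S : Type} [Finite S] [Nonempty S] {𝓛 : Set (TimedWord S)}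
    (h : TLRecognizableBy (fun _ => True) 𝓛) :
    NivatMem valProd (fun {_} _ => True) (interQTL (fun _ => (1 : ℕ)) 𝓛) :=
  ⟨S, inferInstance, inferInstance, id, fun _ => (1, 1), 𝓛, h, fun w => by
    simp only [pushQTL_id, interQTL, valComp_valProd_const_one]⟩

theorem interQTL_in_Nivat_not_recognizable_general {S : Type} [Finite S] [Nonempty S] :
    QTLRecognizable valProd (fun _ : TimedWord S => (1 : ℕ)) ∧
    ∀ 𝓛 : Set (TimedWord S),
      TLRecognizableBy (fun _ => True) 𝓛 →
      ¬ TLRecognizableBy TimedAutomaton.Unambiguous 𝓛 →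
      NivatMem valProd (fun {_} _ => True) (interQTL (fun _ => (1 : ℕ)) 𝓛) ∧
      ¬ QTLRecognizable valProd (interQTL (fun _ => (1 : ℕ)) 𝓛) :=
  ⟨qtlRecognizable_const_one, fun _ hrec hamb =>
    ⟨nivatMem_interQTL_const_one hrec,
      fun hqtl => hamb (tlRecognizableBy_unambiguous_of_qtlRecognizable_interQTL hqtl)⟩⟩

/-- Example: failure of closure under intersection in the
non-idempotent case. Let `Σ` be a singleton alphabet and `𝕄 = (ℕ, +, val, 0)` with
`val` the product of the second components. The constant quantitative timed language
`r ≡ 1` is recognizable over `𝕄`, and for every timed language `𝓛 ⊆ 𝕋Σ⁺` which is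
recognizable but not unambiguously recognizable, `r ∩ 𝓛 ∈ N(Σ,𝕄) \ Rec(Σ,𝕄)`. -/
theorem interQTL_in_Nivat_not_recognizable {S : Type} [Finite S] [Nonempty S]
    (hsing : ∀ x y : S, x = y) :
    QTLRecognizable valProd (fun _ : TimedWord S => (1 : ℕ)) ∧
    ∀ 𝓛 : Set (TimedWord S),
      TLRecognizableBy (fun _ => True) 𝓛 →
      ¬ TLRecognizableBy TimedAutomaton.Unambiguous 𝓛 →
      NivatMem valProd (fun {_} _ => True) (interQTL (fun _ => (1 : ℕ)) 𝓛) ∧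
      ¬ QTLRecognizable valProd (interQTL (fun _ => (1 : ℕ)) 𝓛) :=
  interQTL_in_Nivat_not_recognizable_general
end
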